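/- (Kontsevich's formula.) Let w = c_1⋯c_n be a nonempty word in W^+ and let z ∈ (0,1]; assume z < 1 unless w ∈ W^{++}. Then L_w(z) = ∫_{0 ≤ t_1 ≤ t_2 ≤ ⋯ ≤ t_n ≤ z} f_{c_1}(t_1) f_{c_2}(t_2) ⋯ f_{c_n}(t_n) dt_1 dt_2 ⋯ dt_n, where f_a(t) = 1/(1−t) and f_b(t) = 1/t; in particular, for w ∈ W^{++}, ζ(w) equals this iterated integral over the full simplex 0 ≤ t_1 ≤ ⋯ ≤ t_n ≤ 1. -/

import Mathlib

/-! Words in the letters `a`, `b`; polylogarithms and polyzeta values. -/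

inductive Letter | a | b
deriving DecidableEq

abbrev Word := List Letter

/-- `W⁺` : words not beginning with `b`. -/
def WPlus (w : Word) : Prop := w.head? ≠ some Letter.b

/-- `W⁺⁺` : words not beginning with `b` and not ending with `a`. -/
def WPlusPlus (w : Word) : Prop := w.head? ≠ some Letter.b ∧ w.getLast? ≠ some Letter.a

/-- Auxiliary function computing the composition `λ(w)` of a word. -/
def compAux : ℕ → Word → List ℕ
  | n, [] => [n]
  | n, Letter.b :: w => compAux (n + 1) w
  | n, Letter.a :: w => n :: compAux 1 w

/-- The composition `λ(w)` associated to a (nonempty) word in `W⁺`: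
`λ(a b^{t₁} ⋯ a b^{t_k}) = (1+t₁, …, 1+t_k)`. -/
def comp : Word → List ℕ
  | [] => []
  | _ :: w => compAux 1 w

/-- Index set of a multiple polylogarithm series:
strictly increasing `k`-tuples of positive integers. -/
def PLIdx (k : ℕ) := {f : Fin k → ℕ // StrictMono f ∧ ∀ i, 0 < f i}

/-- The term of the multiple polylogarithm series `L_{r}(z)` at the index `n`. -/
noncomputable def plTerm (r : List ℕ) (z : ℂ) (n : PLIdx r.length) : ℂ :=
  (if h : r.length = 0 then 1 else z ^ n.1 ⟨r.length - 1, by omega⟩) /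
    ∏ i, (n.1 i : ℂ) ^ r.get i

/-- The multiple polylogarithm `L_{r₁,…,r_k}(z) = Σ_{0<n₁<⋯<n_k} z^{n_k}/(n₁^{r₁}⋯n_k^{r_k})`
(equal to `1` for the empty composition). -/
noncomputable def polylog (r : List ℕ) (z : ℂ) : ℂ := ∑' n, plTerm r z n

/-- `L_w(z) := L_{λ(w)}(z)` for a word `w ∈ W⁺`; `L_∅ = 1`. -/
noncomputable def Lw (w : Word) (z : ℂ) : ℂ := polylog (comp w) z

/-- Absolute convergence of the series defining `L_w(z)`. -/
def LwAbsConv (w : Word) (z : ℂ) : Prop := Summable fun n => ‖plTerm (comp w) z n‖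

/-- `ζ(w) = L_w(1)` for `w ∈ W⁺⁺`. -/
noncomputable def zetaW (w : Word) : ℂ := Lw w 1

/-- The integrand letters: `f_a(t) = 1/(1-t)`, `f_b(t) = 1/t`. -/
noncomputable def fLetter : Letter → ℝ → ℝ
  | .a => fun t => (1 - t)⁻¹
  | .b => fun t => t⁻¹

/-!
Both sides are built by appending letters on the right. On the integral side, Fubini in
the last variable gives `J_{wc}(z) = ∫₀^z f_c(s) J_w(s) ds`. On the series side, integrating
`s⁻¹` against a term raises the exponent of the largest index by one, which is what appending `b`
does to `λ(w)`; expanding `(1 - s)⁻¹ = Σ sʲ` and integrating termwise creates a new largest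
index `n_k + j + 1` with exponent `1`, which is what appending `a` does. In `ℝ≥0∞` every
termwise integration is justified by monotone convergence, so the two sides agree for all
`0 ≤ z ≤ 1` by induction on the word; when they are infinite, `toReal` sends both to the junk
value `0` of the real sum and of the Bochner integral.
-/

open MeasureTheory Set
open scoped ENNReal

section Composition

lemma compAux_ne_nil (n : ℕ) (u : Word) : compAux n u ≠ [] := by
  induction u generalizing n with
  | nil => simp [compAux]
  | cons c u ih => cases c <;> simp [compAux, ih]

lemma compAux_concat_a (n : ℕ) (u : Word) : compAux n (u ++ [.a]) = compAux n u ++ [1] := by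
  induction u generalizing n with
  | nil => rfl
  | cons c u ih => cases c <;> simp [compAux, ih]

lemma compAux_concat_b (n : ℕ) (u : Word) :
    compAux n (u ++ [.b]) = (compAux n u).modifyLast (· + 1) := by
  induction u generalizing n with
  | nil => rfl
  | cons c u ih =>
    cases c with
    | a =>
      rw [List.cons_append, compAux, compAux, ih]
      exact (List.modifyLast_append_of_right_ne_nil _ [n] _ (compAux_ne_nil 1 u)).symm
    | b => exact ih (n + 1)

lemma comp_concat_a (w : Word) : comp (w ++ [.a]) = comp w ++ [1] := by
  cases w with
  | nil => rfl
  | cons c u => exact compAux_concat_a 1 u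

lemma comp_concat_b {w : Word} (hw : w ≠ []) :
    ∃ r m, comp w = r ++ [m] ∧ comp (w ++ [.b]) = r ++ [m + 1] := by
  obtain ⟨c, u, rfl⟩ := List.exists_cons_of_ne_nil hw
  obtain ⟨r, m, hrm⟩ := (List.eq_nil_or_concat' (compAux 1 u)).resolve_left (compAux_ne_nil 1 u)
  refine ⟨r, m, hrm, ?_⟩
  rw [List.cons_append, comp, compAux_concat_b, hrm, List.modifyLast_concat]

end Composition

namespace PLIdx

variable {k : ℕ}

instance : Countable (PLIdx k) := Subtype.countable

instance : Unique (PLIdx 0) where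
  default := ⟨Fin.elim0, fun i => i.elim0, fun i => i.elim0⟩
  uniq _ := Subtype.ext (funext fun i => i.elim0)

/-- The largest index, with the convention `0` for the empty tuple. -/
def last (n : PLIdx k) : ℕ := if h : k = 0 then 0 else n.1 ⟨k - 1, by omega⟩

lemma last_succ (n : PLIdx (k + 1)) : n.last = n.1 (Fin.last k) := rfl

lemma le_last (n : PLIdx k) (i : Fin k) : n.1 i ≤ n.last := by
  rw [last, dif_neg (Fin.pos i).ne']
  exact n.2.1.monotone (Fin.le_def.2 (Nat.le_sub_one_of_lt i.2))

def init (n : PLIdx (k + 1)) : PLIdx k :=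
  ⟨Fin.init n.1, fun _ _ h => n.2.1 (Fin.castSucc_lt_castSucc_iff.2 h), fun _ => n.2.2 _⟩

lemma last_init_lt (n : PLIdx (k + 1)) : n.init.last < n.1 (Fin.last k) := by
  rcases k with _ | k
  · exact n.2.2 _
  · exact n.2.1 (Fin.castSucc_lt_last _)

def snoc (n : PLIdx k) (m : ℕ) : PLIdx (k + 1) :=
  ⟨Fin.snoc n.1 (n.last + m + 1), by
    intro i j hij
    induction j using Fin.lastCases with
    | last =>
      induction i using Fin.lastCases with
      | last => exact absurd hij (lt_irrefl _)
      | cast i => simpa using Nat.lt_succ_of_le ((n.le_last i).trans (Nat.le_add_right _ m))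
    | cast j =>
      induction i using Fin.lastCases with
      | last => exact absurd hij (not_lt.2 (Fin.le_last _))
      | cast i => simpa using n.2.1 (Fin.castSucc_lt_castSucc_iff.1 hij),
   fun i => by induction i using Fin.lastCases <;> simp [n.2.2]⟩

@[simp] lemma snoc_castSucc (n : PLIdx k) (m : ℕ) (i : Fin k) :
    (n.snoc m).1 i.castSucc = n.1 i := Fin.snoc_castSucc (α := fun _ => ℕ) ..

@[simp] lemma snoc_last (n : PLIdx k) (m : ℕ) : (n.snoc m).1 (Fin.last k) = n.last + m + 1 :=
  Fin.snoc_last (α := fun _ => ℕ) ..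

def snocEquiv : PLIdx k × ℕ ≃ PLIdx (k + 1) where
  toFun p := p.1.snoc p.2
  invFun n := (n.init, n.1 (Fin.last k) - n.init.last - 1)
  left_inv := fun ⟨n, m⟩ => by
    have : (n.snoc m).init = n := Subtype.ext (Fin.init_snoc (α := fun _ => ℕ) ..)
    ext1
    · exact this
    · simp only [snoc_last, this]; omega
  right_inv n := by
    have := n.last_init_lt
    refine Subtype.ext ?_
    change Fin.snoc (Fin.init n.1) (n.init.last + (n.1 (Fin.last k) - n.init.last - 1) + 1) = n.1
    rw [show n.init.last + (n.1 (Fin.last k) - n.init.last - 1) + 1 = n.1 (Fin.last k) by omega]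
    exact Fin.snoc_init_self _

@[simp] lemma snocEquiv_apply (p : PLIdx k × ℕ) : snocEquiv p = p.1.snoc p.2 := rfl

end PLIdx

section Series

variable {k : ℕ}

noncomputable def polylogTerm (e : Fin k → ℕ) (z : ℝ) (n : PLIdx k) : ℝ :=
  z ^ n.last / ∏ i, (n.1 i : ℝ) ^ e i

noncomputable def polylogENNReal (e : Fin k → ℕ) (z : ℝ) : ℝ≥0∞ :=
  ∑' n, ENNReal.ofReal (polylogTerm e z n)

lemma polylogTerm_nonneg (e : Fin k → ℕ) {z : ℝ} (hz : 0 ≤ z) (n : PLIdx k) :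
    0 ≤ polylogTerm e z n := by
  unfold polylogTerm; positivity

lemma polylogENNReal_zero (e : Fin 0 → ℕ) (z : ℝ) : polylogENNReal e z = 1 := by
  simp [polylogENNReal, polylogTerm, PLIdx.last]

lemma polylogTerm_snoc (e : Fin k → ℕ) (m : ℕ) (z : ℝ) (n : PLIdx (k + 1)) :
    polylogTerm (Fin.snoc e m) z n = z ^ n.1 (Fin.last k) /
      ((∏ i : Fin k, (n.1 i.castSucc : ℝ) ^ e i) * (n.1 (Fin.last k) : ℝ) ^ m) := by
  simp [polylogTerm, n.last_succ, Fin.prod_univ_castSucc]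

lemma lintegral_Ioo_pow_mul (p : ℕ) {c z : ℝ} (hc : 0 ≤ c) (hz : 0 ≤ z) :
    ∫⁻ s in Ioo 0 z, ENNReal.ofReal (s ^ p * c) =
      ENNReal.ofReal (z ^ (p + 1) / (p + 1) * c) := by
  have hint : IntegrableOn (fun s : ℝ => s ^ p * c) (Ioo 0 z) :=
    (continuous_pow p |>.mul continuous_const).integrableOn_Icc.mono_set Ioo_subset_Icc_self
  rw [← ofReal_integral_eq_lintegral_ofReal hint
      (ae_restrict_of_forall_mem measurableSet_Ioo fun s hs => by have := hs.1; positivity),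
    ← integral_Ioc_eq_integral_Ioo, ← intervalIntegral.integral_of_le hz,
    intervalIntegral.integral_mul_const, integral_pow]
  norm_num

lemma polylogENNReal_snoc_succ (e : Fin k → ℕ) (m : ℕ) {z : ℝ} (hz : 0 ≤ z) :
    polylogENNReal (Fin.snoc e (m + 1)) z =
      ∫⁻ s in Ioo 0 z, ENNReal.ofReal s⁻¹ * polylogENNReal (Fin.snoc e m) s := by
  have hP (n : PLIdx (k + 1)) : 0 < ∏ i : Fin k, (n.1 i.castSucc : ℝ) ^ e i :=
    Finset.prod_pos fun i _ => pow_pos (by exact_mod_cast n.2.2 _) _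
  have hsum : ∀ s ∈ Ioo 0 z, ENNReal.ofReal s⁻¹ * polylogENNReal (Fin.snoc e m) s =
      ∑' n : PLIdx (k + 1), ENNReal.ofReal
        (s ^ (n.1 (Fin.last k) - 1) *
          ((∏ i : Fin k, (n.1 i.castSucc : ℝ) ^ e i) * (n.1 (Fin.last k) : ℝ) ^ m)⁻¹) := by
    intro s hs
    rw [polylogENNReal, ← ENNReal.tsum_mul_left]
    refine tsum_congr fun n => ?_
    obtain ⟨N, hN⟩ := Nat.exists_eq_add_one_of_ne_zero (n.2.2 (Fin.last k)).ne'
    rw [← ENNReal.ofReal_mul (inv_nonneg.2 hs.1.le), polylogTerm_snoc, hN]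
    congr 1
    have := hs.1.ne'
    field_simp
    simp only [Nat.add_sub_cancel]
    ring
  rw [setLIntegral_congr_fun measurableSet_Ioo hsum, lintegral_tsum fun n => by fun_prop]
  refine tsum_congr fun n => ?_
  obtain ⟨N, hN⟩ := Nat.exists_eq_add_one_of_ne_zero (n.2.2 (Fin.last k)).ne'
  have := hP n
  rw [lintegral_Ioo_pow_mul _ (by positivity) hz, polylogTerm_snoc, hN]
  congr 1
  field_simp
  push_cast
  ring

lemma ofReal_inv_one_sub_eq_tsum {s : ℝ} (h0 : 0 ≤ s) (h1 : s < 1) :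
    ENNReal.ofReal (1 - s)⁻¹ = ∑' j : ℕ, ENNReal.ofReal (s ^ j) := by
  rw [← tsum_geometric_of_lt_one h0 h1]
  exact ENNReal.ofReal_tsum_of_nonneg (fun j => pow_nonneg h0 j)
    (summable_geometric_of_lt_one h0 h1)

lemma polylogENNReal_snoc_one (e : Fin k → ℕ) {z : ℝ} (hz0 : 0 ≤ z) (hz1 : z ≤ 1) :
    polylogENNReal (Fin.snoc e 1) z =
      ∫⁻ s in Ioo 0 z, ENNReal.ofReal (1 - s)⁻¹ * polylogENNReal e s := by
  have hP (n : PLIdx k) : 0 < ∏ i, (n.1 i : ℝ) ^ e i :=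
    Finset.prod_pos fun i _ => pow_pos (by exact_mod_cast n.2.2 _) _
  have hsum : ∀ s ∈ Ioo 0 z, ENNReal.ofReal (1 - s)⁻¹ * polylogENNReal e s =
      ∑' p : PLIdx k × ℕ,
        ENNReal.ofReal (s ^ (p.1.last + p.2) * (∏ i, (p.1.1 i : ℝ) ^ e i)⁻¹) := by
    intro s hs
    rw [ENNReal.tsum_prod', polylogENNReal, ← ENNReal.tsum_mul_left]
    refine tsum_congr fun n => ?_
    rw [ofReal_inv_one_sub_eq_tsum hs.1.le (hs.2.trans_le hz1), ← ENNReal.tsum_mul_right]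
    refine tsum_congr fun j => ?_
    rw [← ENNReal.ofReal_mul (pow_nonneg hs.1.le j), polylogTerm, pow_add, div_eq_mul_inv]
    congr 1
    ring
  rw [setLIntegral_congr_fun measurableSet_Ioo hsum, lintegral_tsum fun p => by fun_prop,
    polylogENNReal, ← PLIdx.snocEquiv.tsum_eq]
  refine tsum_congr fun ⟨n, j⟩ => ?_
  have := hP n
  rw [lintegral_Ioo_pow_mul _ (by positivity) hz0, polylogTerm_snoc]
  simp only [PLIdx.snocEquiv_apply, PLIdx.snoc_castSucc, PLIdx.snoc_last, pow_one]
  congr 1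
  field_simp
  push_cast
  ring

end Series

section Simplex

variable {n : ℕ}

def simplex (n : ℕ) (z : ℝ) : Set (Fin n → ℝ) :=
  {t | Monotone t ∧ ∀ i, 0 ≤ t i ∧ t i ≤ z}

lemma measurableSet_setOf_mem_simplex (n : ℕ) :
    MeasurableSet {q : ℝ × (Fin n → ℝ) | q.2 ∈ simplex n q.1} := by
  simp only [simplex, Monotone, Set.mem_ofPred_eq]
  exact Measurable.setOf (by fun_prop)

lemma measurableSet_simplex (n : ℕ) (z : ℝ) : MeasurableSet (simplex n z) :=
  (measurableSet_setOf_mem_simplex n).preimage measurable_prodMk_left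

lemma mem_simplex_succ {z : ℝ} {t : Fin (n + 1) → ℝ} :
    t ∈ simplex (n + 1) z ↔
      t (Fin.last n) ∈ Icc 0 z ∧ Fin.init t ∈ simplex n (t (Fin.last n)) := by
  constructor
  · rintro ⟨hmono, hbound⟩
    exact ⟨hbound _, fun i j hij => hmono (Fin.castSucc_le_castSucc_iff.2 hij),
      fun i => ⟨(hbound _).1, hmono (Fin.le_last _)⟩⟩
  · rintro ⟨⟨h0, hz⟩, hmono, hbound⟩
    refine ⟨fun i j hij => ?_, fun i => ?_⟩
    · induction j using Fin.lastCases with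
      | last =>
        induction i using Fin.lastCases with
        | last => exact le_rfl
        | cast i => exact (hbound i).2
      | cast j =>
        induction i using Fin.lastCases with
        | last => exact absurd hij (not_le.2 (Fin.castSucc_lt_last j))
        | cast i => exact hmono (Fin.castSucc_le_castSucc_iff.1 hij)
    · induction i using Fin.lastCases with
      | last => exact ⟨h0, hz⟩
      | cast i => exact ⟨(hbound i).1, (hbound i).2.trans hz⟩

@[fun_prop]
lemma measurable_fLetter (c : Letter) : Measurable (fLetter c) := by
  cases c
  · exact (measurable_const.sub measurable_id).inv
  · exact measurable_inv

noncomputable def simplexIntegrand (f : Fin n → Letter) (t : Fin n → ℝ) : ℝ≥0∞ :=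
  ∏ i, ENNReal.ofReal (fLetter (f i) (t i))

@[fun_prop]
lemma measurable_simplexIntegrand (f : Fin n → Letter) : Measurable (simplexIntegrand f) := by
  unfold simplexIntegrand; fun_prop

lemma simplexIntegrand_snoc (f : Fin n → Letter) (c : Letter) (t : Fin (n + 1) → ℝ) :
    simplexIntegrand (Fin.snoc f c) t =
      ENNReal.ofReal (fLetter c (t (Fin.last n))) * simplexIntegrand f (Fin.init t) := by
  simp [simplexIntegrand, Fin.prod_univ_castSucc, Fin.init, mul_comm]

noncomputable def simplexLIntegral (f : Fin n → Letter) (z : ℝ) : ℝ≥0∞ :=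
  ∫⁻ t in simplex n z, simplexIntegrand f t

lemma simplexLIntegral_zero (f : Fin 0 → Letter) (z : ℝ) : simplexLIntegral f z = 1 := by
  have : simplex 0 z = univ := eq_univ_of_forall fun t => ⟨fun i => i.elim0, fun i => i.elim0⟩
  simp [simplexLIntegral, simplexIntegrand, this, volume_pi]

lemma simplexLIntegral_snoc (f : Fin n → Letter) (c : Letter) (z : ℝ) :
    simplexLIntegral (Fin.snoc f c) z =
      ∫⁻ s in Icc 0 z, ENNReal.ofReal (fLetter c s) * simplexLIntegral f s := by
  set G : ℝ × (Fin n → ℝ) → ℝ≥0∞ := fun q =>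
    (Icc 0 z).indicator (fun s => ENNReal.ofReal (fLetter c s)) q.1 *
      (simplex n q.1).indicator (simplexIntegrand f) q.2
  have hG : Measurable G :=
    ((Measurable.indicator (by fun_prop) measurableSet_Icc).comp measurable_fst).mul
      (Measurable.indicator (by fun_prop : Measurable (simplexIntegrand f ∘ Prod.snd))
        (measurableSet_setOf_mem_simplex n))
  have hsplit (t : Fin (n + 1) → ℝ) :
      (simplex (n + 1) z).indicator (simplexIntegrand (Fin.snoc f c)) t =
        G (MeasurableEquiv.piFinSuccAbove (fun _ => ℝ) (Fin.last n) t) := by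
    have he : MeasurableEquiv.piFinSuccAbove (fun _ => ℝ) (Fin.last n) t =
        (t (Fin.last n), Fin.init t) := by
      ext j <;> simp [Fin.init]
    rw [he]
    by_cases ht : t ∈ simplex (n + 1) z
    · obtain ⟨hlast, hinit⟩ := mem_simplex_succ.1 ht
      simp only [G, indicator_of_mem ht, indicator_of_mem hlast, indicator_of_mem hinit,
        simplexIntegrand_snoc]
    · rw [indicator_of_notMem ht]
      rw [mem_simplex_succ, not_and_or] at ht
      rcases ht with ht | ht <;> simp [G, ht]
  calc simplexLIntegral (Fin.snoc f c) z
      = ∫⁻ t, (simplex (n + 1) z).indicator (simplexIntegrand (Fin.snoc f c)) t :=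
        (lintegral_indicator (measurableSet_simplex _ _) _).symm
    _ = ∫⁻ t, G (MeasurableEquiv.piFinSuccAbove (fun _ => ℝ) (Fin.last n) t) :=
        lintegral_congr hsplit
    _ = ∫⁻ q, G q ∂(volume.prod volume) :=
        (volume_preserving_piFinSuccAbove (fun _ => ℝ) (Fin.last n)).lintegral_comp hG
    _ = ∫⁻ s, ∫⁻ u, G (s, u) := lintegral_prod _ hG.aemeasurable
    _ = ∫⁻ s, (Icc 0 z).indicator
          (fun s => ENNReal.ofReal (fLetter c s) * simplexLIntegral f s) s := by
        refine lintegral_congr fun s => ?_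
        simp only [G]
        rw [lintegral_const_mul _ ((measurable_simplexIntegrand f).indicator
          (measurableSet_simplex _ _)), lintegral_indicator (measurableSet_simplex _ _)]
        by_cases hs : s ∈ Icc 0 z <;> simp [hs, simplexLIntegral]
    _ = _ := lintegral_indicator measurableSet_Icc _

end Simplex

section Words

lemma apply_length_get_concat {α β : Type*} (F : (k : ℕ) → (Fin k → α) → β) (l : List α)
    (x : α) :
    F (l ++ [x]).length (l ++ [x]).get = F (l.length + 1) (Fin.snoc l.get x) := by
  have transport (m : ℕ) (h : m = l.length + 1) (g : Fin m → α)
      (hg : ∀ i, g i = Fin.snoc (α := fun _ => α) l.get x (Fin.cast h i)) :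
      F m g = F _ (Fin.snoc l.get x) := by
    subst h; exact congrArg _ (funext hg)
  refine transport _ (by simp) _ fun i => ?_
  simp only [Fin.snoc, List.get_eq_getElem, List.getElem_append, Fin.val_cast]
  split_ifs <;> simp

lemma WPlus.of_concat {w : Word} {c : Letter} (hw : WPlus (w ++ [c])) : WPlus w := by
  cases w with
  | nil => simp [WPlus]
  | cons d u => exact hw

lemma simplexLIntegral_get_concat (w : Word) (c : Letter) (z : ℝ) :
    simplexLIntegral (w ++ [c]).get z =
      ∫⁻ s in Ioo 0 z, ENNReal.ofReal (fLetter c s) * simplexLIntegral w.get s := by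
  refine (apply_length_get_concat (fun _ f => simplexLIntegral f z) w c).trans ?_
  rw [simplexLIntegral_snoc, Measure.restrict_congr_set Ioo_ae_eq_Icc]

theorem simplexLIntegral_eq_polylogENNReal {w : Word} (hw : WPlus w) {z : ℝ} (hz0 : 0 ≤ z)
    (hz1 : z ≤ 1) : simplexLIntegral w.get z = polylogENNReal (comp w).get z := by
  induction w using List.reverseRecOn generalizing z with
  | nil => exact (simplexLIntegral_zero _ z).trans (polylogENNReal_zero _ z).symm
  | append_singleton w c ih =>
    have hstep : simplexLIntegral (w ++ [c]).get z =
        ∫⁻ s in Ioo 0 z, ENNReal.ofReal (fLetter c s) * polylogENNReal (comp w).get s := by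
      rw [simplexLIntegral_get_concat]
      refine setLIntegral_congr_fun measurableSet_Ioo fun s hs => ?_
      rw [ih hw.of_concat hs.1.le (hs.2.le.trans hz1)]
    rw [hstep, eq_comm]
    cases c with
    | a =>
      rw [comp_concat_a]
      exact (apply_length_get_concat (fun _ e => polylogENNReal e z) _ _).trans
        (polylogENNReal_snoc_one _ hz0 hz1)
    | b =>
      have hne : w ≠ [] := by rintro rfl; exact hw rfl
      obtain ⟨r, m, hcomp, hcomp_b⟩ := comp_concat_b hne
      rw [hcomp_b, hcomp]
      refine (apply_length_get_concat (fun _ e => polylogENNReal e z) _ _).trans ?_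
      rw [polylogENNReal_snoc_succ _ _ hz0]
      refine setLIntegral_congr_fun measurableSet_Ioo fun s hs => ?_
      exact congrArg _ (apply_length_get_concat (fun _ e => polylogENNReal e s) _ _).symm

end Words

lemma plTerm_ofReal (r : List ℕ) (z : ℝ) (n : PLIdx r.length) :
    plTerm r z n = polylogTerm r.get z n := by
  rw [plTerm, polylogTerm, PLIdx.last]
  split_ifs <;> push_cast <;> rfl

lemma Lw_eq_toReal (w : Word) {z : ℝ} (hz : 0 ≤ z) :
    Lw w z = (polylogENNReal (comp w).get z).toReal := by
  rw [Lw, polylog, polylogENNReal, ENNReal.tsum_toReal_eq fun _ => ENNReal.ofReal_ne_top,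
    Complex.ofReal_tsum]
  exact tsum_congr fun n => by
    rw [plTerm_ofReal, ENNReal.toReal_ofReal (polylogTerm_nonneg _ hz _)]

lemma fLetter_nonneg (c : Letter) {t : ℝ} (h0 : 0 ≤ t) (h1 : t ≤ 1) : 0 ≤ fLetter c t := by
  cases c
  · exact inv_nonneg.2 (sub_nonneg.2 h1)
  · exact inv_nonneg.2 h0

lemma integral_simplex_eq_toReal {n : ℕ} (f : Fin n → Letter) {z : ℝ} (hz : z ≤ 1) :
    ∫ t in simplex n z, ∏ i, fLetter (f i) (t i) = (simplexLIntegral f z).toReal := by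
  have hnonneg : ∀ t ∈ simplex n z, ∀ i ∈ Finset.univ, 0 ≤ fLetter (f i) (t i) :=
    fun t ht i _ => fLetter_nonneg _ (ht.2 i).1 ((ht.2 i).2.trans hz)
  have hmeas : Measurable fun t : Fin n → ℝ => ∏ i, fLetter (f i) (t i) := by fun_prop
  rw [integral_eq_lintegral_of_nonneg_ae
      (ae_restrict_of_forall_mem (measurableSet_simplex _ _) fun t ht =>
        Finset.prod_nonneg (hnonneg t ht))
      hmeas.aestronglyMeasurable, simplexLIntegral]
  congr 1
  exact setLIntegral_congr_fun (measurableSet_simplex _ _) fun t ht =>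
    ENNReal.ofReal_prod_of_nonneg (hnonneg t ht)

theorem Lw_eq_integral_simplex {w : Word} (hw : WPlus w) {z : ℝ} (hz0 : 0 ≤ z) (hz1 : z ≤ 1) :
    Lw w z = ((∫ t in simplex w.length z, ∏ i, fLetter (w.get i) (t i) : ℝ) : ℂ) := by
  rw [Lw_eq_toReal w hz0, integral_simplex_eq_toReal _ hz1,
    simplexLIntegral_eq_polylogENNReal hw hz0 hz1]

theorem statement12_general (w : Word) (hw : WPlus w) :
    (∀ z : ℝ, 0 < z → z ≤ 1 → (z = 1 → WPlusPlus w) →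
      Lw w (z : ℂ) =
        ((∫ t in {t : Fin w.length → ℝ | Monotone t ∧ ∀ i, 0 ≤ t i ∧ t i ≤ z},
          ∏ i, fLetter (w.get i) (t i)) : ℝ)) ∧
    (WPlusPlus w →
      zetaW w =
        ((∫ t in {t : Fin w.length → ℝ | Monotone t ∧ ∀ i, 0 ≤ t i ∧ t i ≤ 1},
          ∏ i, fLetter (w.get i) (t i)) : ℝ)) := by
  refine ⟨fun z hz0 hz1 _ => Lw_eq_integral_simplex hw hz0.le hz1, fun _ => ?_⟩
  rw [zetaW, ← Complex.ofReal_one]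
  exact Lw_eq_integral_simplex hw zero_le_one le_rfl

/-- Kontsevich's formula: for a nonempty word `w = c₁⋯c_n ∈ W⁺` and `z ∈ (0,1]`
(with `z < 1` unless `w ∈ W⁺⁺`),
`L_w(z) = ∫_{0 ≤ t₁ ≤ ⋯ ≤ t_n ≤ z} f_{c₁}(t₁) ⋯ f_{c_n}(t_n) dt₁ ⋯ dt_n`;
in particular for `w ∈ W⁺⁺`, `ζ(w)` is the iterated integral over the full simplex. -/
theorem statement12 (w : Word) (hne : w ≠ []) (hw : WPlus w) :
    (∀ z : ℝ, 0 < z → z ≤ 1 → (z = 1 → WPlusPlus w) →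
      Lw w (z : ℂ) =
        ((∫ t in {t : Fin w.length → ℝ | Monotone t ∧ ∀ i, 0 ≤ t i ∧ t i ≤ z},
          ∏ i, fLetter (w.get i) (t i)) : ℝ)) ∧
    (WPlusPlus w →
      zetaW w =
        ((∫ t in {t : Fin w.length → ℝ | Monotone t ∧ ∀ i, 0 ≤ t i ∧ t i ≤ 1},
          ∏ i, fLetter (w.get i) (t i)) : ℝ)) :=
  statement12_general w hw
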